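/- Let φ be a Leibniz 2-cocycle on the twisted Schrödinger-Virasoro algebra with φ(L_0, Y_n) = φ(L_0, M_n) = φ(M_n, L_0) = 0 for all n ∈ ℤ. Then n·φ(M_n, L_m) = m·φ(L_m, M_n) for all m, n ∈ ℤ, and (m+n)·φ(L_m, M_n) = 0 for all m, n ∈ ℤ. -/
import Mathlib


abbrev B : Type := ℤ ⊕ ℤ ⊕ ℤ
abbrev V : Type := B →₀ ℂ

noncomputable def Lg (n : ℤ) : V := Finsupp.single (Sum.inl n) 1
noncomputable def Yg (n : ℤ) : V := Finsupp.single (Sum.inr (Sum.inl n)) 1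
noncomputable def Mg (n : ℤ) : V := Finsupp.single (Sum.inr (Sum.inr n)) 1

/-- Bracket on basis elements of the twisted Schrödinger–Virasoro algebra. -/
noncomputable def brB : B → B → V
  | Sum.inl n, Sum.inl m => ((m : ℂ) - n) • Lg (n + m)
  | Sum.inl n, Sum.inr (Sum.inl m) => ((m : ℂ) - n / 2) • Yg (n + m)
  | Sum.inl n, Sum.inr (Sum.inr p) => (p : ℂ) • Mg (n + p)
  | Sum.inr (Sum.inl m), Sum.inl n => -(((m : ℂ) - n / 2) • Yg (n + m))
  | Sum.inr (Sum.inr p), Sum.inl n => -((p : ℂ) • Mg (n + p))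
  | Sum.inr (Sum.inl m), Sum.inr (Sum.inl m') => ((m' : ℂ) - m) • Mg (m + m')
  | _, _ => 0

/-- The bilinear extension of the bracket to the whole space. -/
noncomputable def bk : V →ₗ[ℂ] V →ₗ[ℂ] V :=
  Finsupp.lsum ℂ fun a => LinearMap.toSpanSingleton ℂ (V →ₗ[ℂ] V)
    (Finsupp.lsum ℂ fun b => LinearMap.toSpanSingleton ℂ V (brB a b))

/-- `φ` is a Leibniz 2-cocycle on the twisted Schrödinger–Virasoro algebra. -/
def IsLeibnizCocycle (φ : V →ₗ[ℂ] V →ₗ[ℂ] ℂ) : Prop :=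
  ∀ x y z : V, φ x (bk y z) = φ (bk x y) z - φ (bk x z) y

lemma bk_single (a b : B) : bk (Finsupp.single a 1) (Finsupp.single b 1) = brB a b := by
  simp [bk, Finsupp.lsum_single, LinearMap.toSpanSingleton_apply]

lemma bkLL (n m : ℤ) : bk (Lg n) (Lg m) = ((m : ℂ) - n) • Lg (n + m) := by
  rw [Lg, Lg, bk_single]; rfl

lemma bkLM (n p : ℤ) : bk (Lg n) (Mg p) = (p : ℂ) • Mg (n + p) := by
  rw [Lg, Mg, bk_single]; rfl

lemma bkML (p n : ℤ) : bk (Mg p) (Lg n) = -((p : ℂ) • Mg (n + p)) := by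
  rw [Lg, Mg, bk_single]; rfl

theorem stmt10 (φ : V →ₗ[ℂ] V →ₗ[ℂ] ℂ) (hco : IsLeibnizCocycle φ)
    (hY : ∀ n : ℤ, φ (Lg 0) (Yg n) = 0)
    (hM1 : ∀ n : ℤ, φ (Lg 0) (Mg n) = 0) (hM2 : ∀ n : ℤ, φ (Mg n) (Lg 0) = 0) :
    ∀ m n : ℤ, (n : ℂ) * φ (Mg n) (Lg m) = (m : ℂ) * φ (Lg m) (Mg n) ∧
      ((m + n : ℤ) : ℂ) * φ (Lg m) (Mg n) = 0 := by
  intro m n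
  constructor
  · -- x = L_0, y = L_m, z = M_n
    have h := hco (Lg 0) (Lg m) (Mg n)
    rw [bkLM, bkLL, bkLM] at h
    simp only [map_smul, LinearMap.smul_apply, smul_eq_mul, map_neg, LinearMap.neg_apply,
      Int.cast_zero, sub_zero, zero_add, hM1] at h
    linear_combination h
  · -- x = L_m, y = L_0, z = M_n
    have h := hco (Lg m) (Lg 0) (Mg n)
    rw [bkLM, bkLL, bkLM] at h
    simp only [map_smul, LinearMap.smul_apply, smul_eq_mul, Int.cast_zero, zero_sub,
      add_zero, zero_add, neg_smul, map_neg, LinearMap.neg_apply, hM2] at h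
    push_cast
    linear_combination h
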